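/- If the sequent Γ ⊃ Δ is derivable in the sequent calculus G, then Γ together with the elementwise negations of Δ derives ⊥ in natural deduction: Γ ++ map Neg Δ ⊢ ⊥. -/

import Mathlib

inductive PropF (V : Type) : Type
  | Var : V → PropF V
  | Bot : PropF V
  | Conj : PropF V → PropF V → PropF V
  | Disj : PropF V → PropF V → PropF V
  | Impl : PropF V → PropF V → PropF V
deriving DecidableEq

variable {V : Type} [DecidableEq V]

def PropF.Neg (A : PropF V) : PropF V := A.Impl .Bot
def PropF.Top : PropF V := PropF.Neg .Bot

def TrueQ (v : V → Bool) : PropF V → Bool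
  | .Var p => v p
  | .Bot => false
  | .Conj B C => TrueQ v B && TrueQ v C
  | .Disj B C => TrueQ v B || TrueQ v C
  | .Impl B C => !(TrueQ v B) || TrueQ v C

def Satisfies (v : V → Bool) (Γ : List (PropF V)) : Prop := ∀ A ∈ Γ, TrueQ v A = true
def Models (Γ : List (PropF V)) (A : PropF V) : Prop := ∀ v, Satisfies v Γ → TrueQ v A = true
def Valid (A : PropF V) : Prop := Models [] A
def Validates (v : V → Bool) (Δ : List (PropF V)) : Prop := ∃ A ∈ Δ, TrueQ v A = true

inductive Nc : List (PropF V) → PropF V → Prop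
  | Nax (Γ : List (PropF V)) (A : PropF V) : A ∈ Γ → Nc Γ A
  | ImpI (Γ : List (PropF V)) (A B : PropF V) : Nc (A :: Γ) B → Nc Γ (A.Impl B)
  | ImpE (Γ : List (PropF V)) (A B : PropF V) : Nc Γ (A.Impl B) → Nc Γ A → Nc Γ B
  | BotC (Γ : List (PropF V)) (A : PropF V) : Nc (A.Neg :: Γ) .Bot → Nc Γ A
  | AndI (Γ : List (PropF V)) (A B : PropF V) : Nc Γ A → Nc Γ B → Nc Γ (A.Conj B)
  | AndE1 (Γ : List (PropF V)) (A B : PropF V) : Nc Γ (A.Conj B) → Nc Γ A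
  | AndE2 (Γ : List (PropF V)) (A B : PropF V) : Nc Γ (A.Conj B) → Nc Γ B
  | OrI1 (Γ : List (PropF V)) (A B : PropF V) : Nc Γ A → Nc Γ (A.Disj B)
  | OrI2 (Γ : List (PropF V)) (A B : PropF V) : Nc Γ B → Nc Γ (A.Disj B)
  | OrE (Γ : List (PropF V)) (A B C : PropF V) : Nc Γ (A.Disj B) → Nc (A :: Γ) C → Nc (B :: Γ) C → Nc Γ C

def Provable (A : PropF V) : Prop := Nc [] A

inductive NNF (V : Type) : Type
  | NPos : V → NNF V
  | NNeg : V → NNF V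
  | NBot : NNF V
  | NTop : NNF V
  | NConj : NNF V → NNF V → NNF V
  | NDisj : NNF V → NNF V → NNF V
deriving DecidableEq

def NNFtoPropF : NNF V → PropF V
  | .NPos p => .Var p
  | .NNeg p => (PropF.Var p).Neg
  | .NBot => .Bot
  | .NTop => PropF.Top
  | .NConj B C => (NNFtoPropF B).Conj (NNFtoPropF C)
  | .NDisj B C => (NNFtoPropF B).Disj (NNFtoPropF C)

mutual
def MakeNNF : PropF V → NNF V
  | .Var p => .NPos p
  | .Bot => .NBot
  | .Disj B C => .NDisj (MakeNNF B) (MakeNNF C)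
  | .Conj B C => .NConj (MakeNNF B) (MakeNNF C)
  | .Impl B C => .NDisj (MakeNNFN B) (MakeNNF C)
def MakeNNFN : PropF V → NNF V
  | .Var p => .NNeg p
  | .Bot => .NTop
  | .Disj B C => .NConj (MakeNNFN B) (MakeNNFN C)
  | .Conj B C => .NDisj (MakeNNFN B) (MakeNNFN C)
  | .Impl B C => .NConj (MakeNNF B) (MakeNNFN C)
end

inductive Lit (V : Type) : Type
  | LPos : V → Lit V
  | LNeg : V → Lit V
  | LBot : Lit V
  | LTop : Lit V
deriving DecidableEq

def LiteraltoPropF : Lit V → PropF V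
  | .LPos p => .Var p
  | .LNeg p => (PropF.Var p).Neg
  | .LBot => .Bot
  | .LTop => PropF.Top

abbrev Clause (V : Type) : Type := List (Lit V)
abbrev CNF (V : Type) : Type := List (Clause V)

abbrev ClausetoPropF (l : Clause V) : PropF V :=
  l.foldr (fun a r => (LiteraltoPropF a).Disj r) .Bot

def CNFtoPropF (ll : CNF V) : PropF V :=
  ll.foldr (fun c r => (ClausetoPropF c).Conj r) PropF.Top

def AddClause (l : Clause V) (ll : CNF V) : CNF V := ll.map (fun l2 => l ++ l2)
def Disjunct (ll ll2 : CNF V) : CNF V := ll.flatMap (fun l => AddClause l ll2)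

def MakeCNF : NNF V → CNF V
  | .NPos p => [[.LPos p]]
  | .NNeg p => [[.LNeg p]]
  | .NBot => [[.LBot]]
  | .NTop => [[.LTop]]
  | .NConj B C => MakeCNF B ++ MakeCNF C
  | .NDisj B C => Disjunct (MakeCNF B) (MakeCNF C)

def Valid_Clause (l : Clause V) : Prop :=
  Lit.LTop ∈ l ∨ ∃ p, Lit.LPos p ∈ l ∧ Lit.LNeg p ∈ l
def Valid_CNF (ll : CNF V) : Prop := ∀ l ∈ ll, Valid_Clause l

inductive AxiomH : PropF V → Prop
  | HOrI1 (A B : PropF V) : AxiomH (A.Impl (A.Disj B))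
  | HOrI2 (A B : PropF V) : AxiomH (B.Impl (A.Disj B))
  | HAndI (A B : PropF V) : AxiomH (A.Impl (B.Impl (A.Conj B)))
  | HOrE (A B C : PropF V) : AxiomH ((A.Disj B).Impl ((A.Impl C).Impl ((B.Impl C).Impl C)))
  | HAndE1 (A B : PropF V) : AxiomH ((A.Conj B).Impl A)
  | HAndE2 (A B : PropF V) : AxiomH ((A.Conj B).Impl B)
  | HS (A B C : PropF V) : AxiomH ((A.Impl (B.Impl C)).Impl ((A.Impl B).Impl (A.Impl C)))
  | HK (A B : PropF V) : AxiomH (A.Impl (B.Impl A))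
  | HClas (A : PropF V) : AxiomH ((A.Neg.Neg).Impl A)

inductive Hc : List (PropF V) → PropF V → Prop
  | Hass (A : PropF V) (Γ : List (PropF V)) : A ∈ Γ → Hc Γ A
  | Hax (A : PropF V) (Γ : List (PropF V)) : AxiomH A → Hc Γ A
  | HImpE (Γ : List (PropF V)) (A B : PropF V) : Hc Γ (A.Impl B) → Hc Γ A → Hc Γ B

inductive G : List (PropF V) → List (PropF V) → Prop
  | Gax (A : PropF V) (Γ Δ : List (PropF V)) : A ∈ Γ → A ∈ Δ → G Γ Δ
  | GBot (Γ Δ : List (PropF V)) : PropF.Bot ∈ Γ → G Γ Δ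
  | AndL (A B : PropF V) (Γ1 Γ2 Δ : List (PropF V)) : G (Γ1 ++ A :: B :: Γ2) Δ → G (Γ1 ++ (A.Conj B) :: Γ2) Δ
  | AndR (A B : PropF V) (Γ Δ1 Δ2 : List (PropF V)) : G Γ (Δ1 ++ A :: Δ2) → G Γ (Δ1 ++ B :: Δ2) → G Γ (Δ1 ++ (A.Conj B) :: Δ2)
  | OrL (A B : PropF V) (Γ1 Γ2 Δ : List (PropF V)) : G (Γ1 ++ A :: Γ2) Δ → G (Γ1 ++ B :: Γ2) Δ → G (Γ1 ++ (A.Disj B) :: Γ2) Δ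
  | OrR (A B : PropF V) (Γ Δ1 Δ2 : List (PropF V)) : G Γ (Δ1 ++ A :: B :: Δ2) → G Γ (Δ1 ++ (A.Disj B) :: Δ2)
  | ImpL (A B : PropF V) (Γ1 Γ2 Δ : List (PropF V)) : G (Γ1 ++ B :: Γ2) Δ → G (Γ1 ++ Γ2) (A :: Δ) → G (Γ1 ++ (A.Impl B) :: Γ2) Δ
  | ImpR (A B : PropF V) (Γ Δ1 Δ2 : List (PropF V)) : G (A :: Γ) (Δ1 ++ B :: Δ2) → G Γ (Δ1 ++ (A.Impl B) :: Δ2)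
  | Cut (A : PropF V) (Γ Δ : List (PropF V)) : G Γ (A :: Δ) → G (A :: Γ) Δ → G Γ Δ

inductive Gcf : List (PropF V) → List (PropF V) → Prop
  | Gax (p : V) (Γ Δ : List (PropF V)) : PropF.Var p ∈ Γ → PropF.Var p ∈ Δ → Gcf Γ Δ
  | GBot (Γ Δ : List (PropF V)) : PropF.Bot ∈ Γ → Gcf Γ Δ
  | AndL (A B : PropF V) (Γ1 Γ2 Δ : List (PropF V)) : Gcf (Γ1 ++ A :: B :: Γ2) Δ → Gcf (Γ1 ++ (A.Conj B) :: Γ2) Δ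
  | AndR (A B : PropF V) (Γ Δ1 Δ2 : List (PropF V)) : Gcf Γ (Δ1 ++ A :: Δ2) → Gcf Γ (Δ1 ++ B :: Δ2) → Gcf Γ (Δ1 ++ (A.Conj B) :: Δ2)
  | OrL (A B : PropF V) (Γ1 Γ2 Δ : List (PropF V)) : Gcf (Γ1 ++ A :: Γ2) Δ → Gcf (Γ1 ++ B :: Γ2) Δ → Gcf (Γ1 ++ (A.Disj B) :: Γ2) Δ
  | OrR (A B : PropF V) (Γ Δ1 Δ2 : List (PropF V)) : Gcf Γ (Δ1 ++ A :: B :: Δ2) → Gcf Γ (Δ1 ++ (A.Disj B) :: Δ2)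
  | ImpL (A B : PropF V) (Γ1 Γ2 Δ : List (PropF V)) : Gcf (Γ1 ++ B :: Γ2) Δ → Gcf (Γ1 ++ Γ2) (A :: Δ) → Gcf (Γ1 ++ (A.Impl B) :: Γ2) Δ
  | ImpR (A B : PropF V) (Γ Δ1 Δ2 : List (PropF V)) : Gcf (A :: Γ) (Δ1 ++ B :: Δ2) → Gcf Γ (Δ1 ++ (A.Impl B) :: Δ2)

def BigOr (Δ : List (PropF V)) : PropF V := Δ.foldr PropF.Disj .Bot

def size : PropF V → Nat
  | .Var _ => 0
  | .Bot => 0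
  | .Conj B C => (size B + size C).succ
  | .Disj B C => (size B + size C).succ
  | .Impl B C => (size B + size C).succ

def sizel (Γ : List (PropF V)) : Nat := (Γ.map size).sum
def sizes (Γ Δ : List (PropF V)) : Nat := sizel Γ + sizel Δ

/-!
Read the sequent `Γ ⊃ Δ` as the refutation `Γ, ¬Δ ⊢ ⊥`. Since `Nc` is monotone in its
context, a premise of a rule of `G` only has to be refuted from the context of the conclusion
extended by the premise's new formulas. Those are derived from the principal formula: by
elimination rules when it is on the left, by reductio against its negation when it is on the
right.
-/

namespace Nc

variable {V : Type} {Γ Γ' : List (PropF V)} {A B C : PropF V}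

theorem mono (h : Nc Γ A) (hs : Γ ⊆ Γ') : Nc Γ' A := by
  induction h generalizing Γ' with
  | Nax _ _ hA => exact .Nax _ _ (hs hA)
  | ImpI _ _ _ _ ih => exact .ImpI _ _ _ (ih (List.cons_subset_cons _ hs))
  | ImpE _ _ _ _ _ ih₁ ih₂ => exact .ImpE _ _ _ (ih₁ hs) (ih₂ hs)
  | BotC _ _ _ ih => exact .BotC _ _ (ih (List.cons_subset_cons _ hs))
  | AndI _ _ _ _ _ ih₁ ih₂ => exact .AndI _ _ _ (ih₁ hs) (ih₂ hs)
  | AndE1 _ _ _ _ ih => exact .AndE1 _ _ _ (ih hs)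
  | AndE2 _ _ _ _ ih => exact .AndE2 _ _ _ (ih hs)
  | OrI1 _ _ _ _ ih => exact .OrI1 _ _ _ (ih hs)
  | OrI2 _ _ _ _ ih => exact .OrI2 _ _ _ (ih hs)
  | OrE _ _ _ _ _ _ _ ih₁ ih₂ ih₃ =>
    exact .OrE _ _ _ _ (ih₁ hs) (ih₂ (List.cons_subset_cons _ hs))
      (ih₃ (List.cons_subset_cons _ hs))

theorem cut (hA : Nc Γ A) (h : Nc (A :: Γ) B) : Nc Γ B :=
  .ImpE _ _ _ (.ImpI _ _ _ h) hA

theorem of_subset_cons (h : Nc Γ' B) (hs : Γ' ⊆ A :: Γ) (hA : Nc Γ A) : Nc Γ B :=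
  cut hA (h.mono hs)

theorem of_subset_cons_cons (h : Nc Γ' C) (hs : Γ' ⊆ A :: B :: Γ) (hA : Nc Γ A)
    (hB : Nc Γ B) : Nc Γ C :=
  .ImpE _ _ _ (.ImpE _ _ _ (.ImpI _ _ _ (.ImpI _ _ _ (h.mono hs))) hB) hA

theorem byContra_of_subset (h : Nc Γ' .Bot) (hs : Γ' ⊆ A.Neg :: Γ) : Nc Γ A :=
  .BotC _ _ (h.mono hs)

theorem bot_of_neg_mem (hn : A.Neg ∈ Γ) (hA : Nc Γ A) : Nc Γ .Bot :=
  .ImpE _ _ _ (.Nax _ _ hn) hA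

end Nc

theorem stmt11 {V : Type} [DecidableEq V] (Γ Δ : List (PropF V)) (h : G Γ Δ) :
    Nc (Γ ++ Δ.map PropF.Neg) .Bot := by
  induction h with
  | Gax A _ _ hΓ hΔ => exact .bot_of_neg_mem (A := A) (by grind) (.Nax _ _ (by grind))
  | GBot _ _ hΓ => exact .Nax _ _ (by grind)
  | AndL A B Γ₁ Γ₂ Δ _ ih =>
    have hAB : Nc (Γ₁ ++ A.Conj B :: Γ₂ ++ Δ.map PropF.Neg) (A.Conj B) := .Nax _ _ (by grind)
    exact ih.of_subset_cons_cons (by grind) (.AndE1 _ _ _ hAB) (.AndE2 _ _ _ hAB)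
  | AndR A B _ _ _ _ _ ih₁ ih₂ =>
    exact .bot_of_neg_mem (A := A.Conj B) (by grind)
      (.AndI _ _ _ (ih₁.byContra_of_subset (by grind)) (ih₂.byContra_of_subset (by grind)))
  | OrL A B _ _ _ _ _ ih₁ ih₂ =>
    exact .OrE _ A B _ (.Nax _ _ (by grind)) (ih₁.mono (by grind)) (ih₂.mono (by grind))
  | OrR A B _ _ _ _ ih =>
    exact ih.of_subset_cons_cons (A := A.Neg) (B := B.Neg) (by grind)
      (.ImpI _ _ _ (.bot_of_neg_mem (A := A.Disj B) (by grind)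
        (.OrI1 _ _ _ (.Nax _ _ (by grind)))))
      (.ImpI _ _ _ (.bot_of_neg_mem (A := A.Disj B) (by grind)
        (.OrI2 _ _ _ (.Nax _ _ (by grind)))))
  | ImpL A B Γ₁ Γ₂ Δ _ _ ih₁ ih₂ =>
    have hA : Nc (Γ₁ ++ A.Impl B :: Γ₂ ++ Δ.map PropF.Neg) A :=
      ih₂.byContra_of_subset (by grind)
    exact ih₁.of_subset_cons (A := B) (by grind) (.ImpE _ A _ (.Nax _ _ (by grind)) hA)
  | ImpR A B _ _ _ _ ih =>
    exact .bot_of_neg_mem (A := A.Impl B) (by grind)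
      (.ImpI _ _ _ (ih.byContra_of_subset (by grind)))
  | Cut A _ _ _ _ ih₁ ih₂ => exact .cut (ih₁.byContra_of_subset (by grind)) ih₂
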